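/- arXiv:2209.14997 — 5 statements merged into one kernel-verified Lean document; each statement's English description precedes it below -/
import Mathlib

section
/- Let O be a real O×S matrix such that ‖Ox‖₁ ≥ α‖x‖₁ for all x ∈ ℝ^S (where ‖·‖₁ is the vector ℓ1-norm). Then there exists a matrix Y ∈ ℝ^{S×O} with YO = 0 such that the operator ℓ1-norm of (O† + Y) satisfies ‖O† + Y‖₁ ≤ S/α, where O† is the Moore–Penrose pseudoinverse of O. -/
open Matrix

/-- Moore–Penrose pseudoinverse of a matrix with linearly independent columns,
`M† = (Mᵀ M)⁻¹ Mᵀ`. -/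
noncomputable def moorePenrose {m n : ℕ} (M : Matrix (Fin m) (Fin n) ℝ) :
    Matrix (Fin n) (Fin m) ℝ :=
  (Mᵀ * M)⁻¹ * Mᵀ

/-- If `O : ℝ^{O×S}` satisfies `‖Ox‖₁ ≥ α‖x‖₁` for all `x`, then there is `Y` with
`Y O = 0` such that the induced ℓ1 operator norm of `O† + Y` is at most `S/α`. -/
theorem l1_pseudoinverse {O S : ℕ} (A : Matrix (Fin O) (Fin S) ℝ) (α : ℝ) (hα : 0 < α)
    (h : ∀ x : Fin S → ℝ, α * ∑ j, |x j| ≤ ∑ i, |A.mulVec x i|) :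
    ∃ Y : Matrix (Fin S) (Fin O) ℝ, Y * A = 0 ∧
      ∀ z : Fin O → ℝ, ∑ j, |((moorePenrose A + Y).mulVec z) j| ≤ (S / α) * ∑ i, |z i| := by
  classical
  -- A is injective
  have hker : ∀ x : Fin S → ℝ, A.mulVec x = 0 → x = 0 := by
    intro x hx
    have := h x
    rw [hx] at this
    simp only [Pi.zero_apply, abs_zero, Finset.sum_const_zero] at this
    have hle : ∑ j, |x j| ≤ 0 := by
      by_contra hc
      push_neg at hc
      nlinarith
    have hge : (0:ℝ) ≤ ∑ j, |x j| := Finset.sum_nonneg fun j _ => abs_nonneg _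
    have hsum : ∑ j, |x j| = 0 := le_antisymm hle hge
    funext j
    have := (Finset.sum_eq_zero_iff_of_nonneg (fun j _ => abs_nonneg (x j))).mp hsum j
      (Finset.mem_univ j)
    simpa [abs_eq_zero] using this
  have hinj : Function.Injective (A.mulVecLin) := by
    rw [injective_iff_map_eq_zero (A.mulVecLin)]
    exact fun x hx => hker x hx
  -- AᵀA is invertible
  have hdet : IsUnit (Aᵀ * A).det := by
    by_contra hc
    have hdet0 : (Aᵀ * A).det = 0 := by
      rcases eq_or_ne ((Aᵀ * A).det) 0 with h0 | h0
      · exact h0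
      · exact absurd (isUnit_iff_ne_zero.mpr h0) hc
    obtain ⟨v, hv, hmv⟩ := (Matrix.exists_mulVec_eq_zero_iff).mpr hdet0
    have hAv : A.mulVec v = 0 := by
      have h1 : (A.mulVec v) ⬝ᵥ (A.mulVec v) = 0 := by
        have : v ⬝ᵥ ((Aᵀ * A).mulVec v) = 0 := by rw [hmv]; simp
        rwa [← Matrix.mulVec_mulVec, Matrix.dotProduct_mulVec, Matrix.vecMul_transpose]
          at this
      have : ∀ i, A.mulVec v i = 0 := by
        intro i
        have hsq : ∑ i, (A.mulVec v i) * (A.mulVec v i) = 0 := h1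
        have := (Finset.sum_eq_zero_iff_of_nonneg
          (fun i _ => mul_self_nonneg (A.mulVec v i))).mp hsq i (Finset.mem_univ i)
        nlinarith [this]
      funext i; exact this i
    exact hv (hker v hAv)
  -- the Hahn–Banach extensions: for each j, a functional g j with g j ∘ A = proj j
  -- and |g j z| ≤ α⁻¹ * ∑ |z i|
  set φ := A.mulVecLin with hφ
  set N : (Fin O → ℝ) → ℝ := fun z => α⁻¹ * ∑ i, |z i| with hN
  have hNhom : ∀ c : ℝ, 0 < c → ∀ z, N (c • z) = c * N z := by
    intro c hc z
    simp only [hN, Pi.smul_apply, smul_eq_mul, abs_mul, abs_of_pos hc,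
      ← Finset.mul_sum]
    ring
  have hNadd : ∀ z w, N (z + w) ≤ N z + N w := by
    intro z w
    simp only [hN, ← mul_add, ← Finset.sum_add_distrib]
    apply mul_le_mul_of_nonneg_left _ (inv_nonneg.mpr hα.le)
    exact Finset.sum_le_sum fun i _ => abs_add_le _ _
  have key : ∀ j : Fin S, ∃ g : (Fin O → ℝ) →ₗ[ℝ] ℝ,
      (∀ x : Fin S → ℝ, g (A.mulVec x) = x j) ∧ ∀ z, |g z| ≤ N z := by
    intro j
    set e : (Fin S → ℝ) ≃ₗ[ℝ] LinearMap.range φ := LinearEquiv.ofInjective φ hinj with he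
    set f : LinearMap.range φ →ₗ[ℝ] ℝ := (LinearMap.proj j) ∘ₗ e.symm.toLinearMap with hf
    have hfval : ∀ x : Fin S → ℝ, f ⟨φ x, LinearMap.mem_range_self φ x⟩ = x j := by
      intro x
      have : e.symm ⟨φ x, LinearMap.mem_range_self φ x⟩ = x := by
        apply e.injective
        rw [e.apply_symm_apply]
        rfl
      simp [hf, this]
    have hbound : ∀ y : LinearMap.range φ, f y ≤ N (y : Fin O → ℝ) := by
      rintro ⟨y, hy⟩
      obtain ⟨x, rfl⟩ := hy
      rw [hfval x]
      have h1 : x j ≤ |x j| := le_abs_self _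
      have h2 : |x j| ≤ ∑ k, |x k| :=
        Finset.single_le_sum (fun k _ => abs_nonneg (x k)) (Finset.mem_univ j)
      have h3 : ∑ k, |x k| ≤ α⁻¹ * ∑ i, |φ x i| := by
        rw [le_inv_mul_iff₀ hα]
        exact h x
      exact h1.trans (h2.trans h3)
    obtain ⟨g, hg1, hg2⟩ := exists_extension_of_le_sublinear ⟨LinearMap.range φ, f⟩ N
      hNhom hNadd hbound
    refine ⟨g, fun x => ?_, fun z => ?_⟩
    · have := hg1 ⟨φ x, LinearMap.mem_range_self φ x⟩
      simp only [LinearPMap.mk_apply] at this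
      rw [show A.mulVec x = (φ x : Fin O → ℝ) from rfl]
      rw [this, hfval x]
    · rcases abs_cases (g z) with ⟨heq, _⟩ | ⟨heq, _⟩
      · rw [heq]; exact hg2 z
      · rw [heq]
        have := hg2 (-z)
        simp only [map_neg] at this
        calc -g z ≤ N (-z) := this
        _ = N z := by simp [hN]
  choose g hg1 hg2 using key
  -- the matrix B with rows g j
  set B : Matrix (Fin S) (Fin O) ℝ :=
    fun j i => g j (fun k => if i = k then 1 else 0) with hB
  have hBmul : ∀ (z : Fin O → ℝ) (j : Fin S), B.mulVec z j = g j z := by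
    intro z j
    rw [LinearMap.pi_apply_eq_sum_univ (g j) z]
    simp only [Matrix.mulVec, dotProduct, hB, smul_eq_mul]
    exact Finset.sum_congr rfl fun i _ => mul_comm _ _
  have hBA : B * A = 1 := by
    ext j k
    have hcol : A.mulVec (fun l => if k = l then 1 else 0) = fun i => A i k := by
      funext i
      simp [Matrix.mulVec, dotProduct]
    have h1 : (B * A) j k = B.mulVec (fun i => A i k) j := by
      rw [Matrix.mul_apply]
      simp [Matrix.mulVec, dotProduct]
    rw [h1, ← hcol, hBmul, hg1 j]
    simp [Matrix.one_apply, eq_comm]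
  -- moorePenrose A * A = 1
  have hMP : moorePenrose A * A = 1 := by
    rw [moorePenrose, Matrix.mul_assoc, Matrix.nonsing_inv_mul _ hdet]
  refine ⟨B - moorePenrose A, ?_, ?_⟩
  · rw [Matrix.sub_mul, hBA, hMP, sub_self]
  · intro z
    have hBform : moorePenrose A + (B - moorePenrose A) = B := add_sub_cancel _ _
    rw [hBform]
    calc ∑ j, |B.mulVec z j| = ∑ j : Fin S, |g j z| := by
          exact Finset.sum_congr rfl fun j _ => by rw [hBmul]
    _ ≤ ∑ _j : Fin S, N z := Finset.sum_le_sum fun j _ => hg2 j z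
    _ = S * (α⁻¹ * ∑ i, |z i|) := by simp [hN]
    _ = (S / α) * ∑ i, |z i| := by rw [div_eq_mul_inv]; ring
end

section
/- Let X ⊂ ℝ^N be a finite set of nonzero vectors whose span has dimension d. Then there exists a matrix A ∈ ℝ^{N×d} whose columns are of the form x/‖x‖₁ for some x ∈ X, such that: (1) for every x ∈ X, A A† x = x; (2) for every x ∈ X, ‖A† x‖₁ ≤ d·‖x‖₁; and (3) the operator ℓ1-norm of A satisfies ‖A‖₁ ≤ 1. -/
/-!
Among all `d`-tuples of ℓ1-normalised elements of `X`, take one maximising the absolute value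
of the determinant with respect to a fixed basis of `span X`. By Cramer's rule, the coefficients
of any normalised `x` in this tuple are ratios of determinants of such tuples, hence lie in
`[-1, 1]` (a barycentric spanner). Taking the tuple as the columns of `A`, the columns are
linearly independent, so `A† A = 1` and `A† x` is the coefficient vector of `x`, of ℓ1-norm at
most `d ‖x‖₁`; the columns have ℓ1-norm one, so `‖A‖₁ ≤ 1`.
-/

open Matrix

open Function Module Submodule

section BarycentricSpanner

variable {K M N : Type*} [Field K] [LinearOrder K]
  [AddCommGroup M] [Module K M] [AddCommGroup N] [Module K N] {ι : Type*} [Fintype ι]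

variable (K) in
def IsBarycentricSpanner (V : Set M) (b : ι → M) : Prop :=
  (∀ j, b j ∈ V) ∧ ∀ v ∈ V, ∃ c : ι → K, (∀ j, |c j| ≤ 1) ∧ ∑ j, c j • b j = v

theorem IsBarycentricSpanner.map {V : Set M} {b : ι → M} (hb : IsBarycentricSpanner K V b)
    (f : M →ₗ[K] N) : IsBarycentricSpanner K (f '' V) (f ∘ b) := by
  refine ⟨fun j => Set.mem_image_of_mem f (hb.1 j), ?_⟩
  rintro _ ⟨v, hv, rfl⟩
  obtain ⟨c, hc, rfl⟩ := hb.2 v hv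
  exact ⟨c, hc, by simp [map_sum]⟩

variable [IsStrictOrderedRing K]

theorem IsBarycentricSpanner.exists_of_smul_mem {V : Set M} {b : ι → M}
    (hb : IsBarycentricSpanner K V b) {r : K} (hr : r ≠ 0) {x : M} (hx : r • x ∈ V) :
    ∃ c : ι → K, (∀ j, |c j| ≤ |r|⁻¹) ∧ ∑ j, c j • b j = x := by
  obtain ⟨c, hc, hsum⟩ := hb.2 _ hx
  refine ⟨fun j => r⁻¹ * c j, fun j => ?_, ?_⟩
  · rw [abs_mul, abs_inv]
    exact mul_le_of_le_one_right (by positivity) (hc j)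
  · simp only [mul_smul, ← Finset.smul_sum, hsum, inv_smul_smul₀ hr]

theorem AlternatingMap.map_update_sum_smul {R M' : Type*} [CommSemiring R] [AddCommMonoid M']
    [Module R M'] [DecidableEq ι] (f : M' [⋀^ι]→ₗ[R] R) (b : ι → M') (c : ι → R) (j : ι) :
    f (update b j (∑ k, c k • b k)) = c j * f b := by
  rw [f.map_update_sum, Finset.sum_eq_single j]
  · rw [f.map_update_smul, update_eq_self, smul_eq_mul]
  · intro k _ hkj
    rw [f.map_update_smul, f.map_update_self _ hkj.symm, smul_zero]
  · simp

theorem AlternatingMap.abs_coeff_le_one_of_forall_abs_le (f : M [⋀^ι]→ₗ[K] K) {V : Set M}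
    {b : ι → M} (hbV : ∀ j, b j ∈ V) (hf : f b ≠ 0)
    (hmax : ∀ b' : ι → M, (∀ j, b' j ∈ V) → |f b'| ≤ |f b|)
    {c : ι → K} (hc : ∑ k, c k • b k ∈ V) (j : ι) : |c j| ≤ 1 := by
  classical
  have hle := hmax (update b j (∑ k, c k • b k)) fun i => by
    rcases eq_or_ne i j with rfl | hij
    · rwa [update_self]
    · rw [update_of_ne hij]; exact hbV i
  rw [f.map_update_sum_smul, abs_mul] at hle
  exact (mul_le_iff_le_one_left (abs_pos.mpr hf)).mp hle

theorem exists_isBarycentricSpanner_of_span_eq_top {V : Set M} (hV : V.Finite)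
    (hspan : span K V = ⊤) :
    ∃ b : Fin (finrank K M) → M, LinearIndependent K b ∧ IsBarycentricSpanner K V b := by
  obtain ⟨t, htV, htspan, htli⟩ := exists_linearIndependent K V
  have : Fintype t := (hV.subset htV).fintype
  have : Finite V := hV.to_subtype
  let Bt : Basis t K M := Basis.mk htli (by simp [htspan, hspan])
  let B : Basis (Fin (finrank K M)) K M :=
    Bt.reindex (Fintype.equivFinOfCardEq (finrank_eq_card_basis Bt).symm)
  let vol : (Fin (finrank K M) → V) → K := fun b => |B.det (Subtype.val ∘ b)|
  have hB : ∀ j, B j ∈ V := fun j => htV (by simp [B, Bt])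
  obtain ⟨b, hmax⟩ := @Finite.exists_max _ _ _ ⟨fun j => ⟨B j, hB j⟩⟩ _ vol
  have hdet : B.det (Subtype.val ∘ b) ≠ 0 := by
    have h1 := hmax fun j => ⟨B j, hB j⟩
    simp only [vol, comp_def, B.det_self, abs_one] at h1
    exact abs_pos.mp (lt_of_lt_of_le one_pos h1)
  obtain ⟨hli, hbspan⟩ := B.is_basis_iff_det.mpr (isUnit_iff_ne_zero.mpr hdet)
  refine ⟨Subtype.val ∘ b, hli, fun j => (b j).2, fun v hv => ?_⟩
  obtain ⟨c, rfl⟩ := (mem_span_range_iff_exists_fun K).mp (hbspan ▸ mem_top : v ∈ _)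
  refine ⟨c, fun j => B.det.abs_coeff_le_one_of_forall_abs_le (fun j => (b j).2) hdet
    (fun b' hb' => hmax fun j => ⟨b' j, hb' j⟩) hv j, rfl⟩

theorem exists_isBarycentricSpanner (V : Finset M) {d : ℕ}
    (hd : finrank K (span K (V : Set M)) = d) :
    ∃ b : Fin d → M, LinearIndependent K b ∧ IsBarycentricSpanner K (V : Set M) b := by
  subst hd
  set W := span K (V : Set M)
  obtain ⟨b, hli, hb⟩ := exists_isBarycentricSpanner_of_span_eq_top
    (V.finite_toSet.preimage Subtype.val_injective.injOn)
    (span_span_coe_preimage (R := K) (s := (V : Set M)))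
  refine ⟨W.subtype ∘ b, hli.map' W.subtype W.ker_subtype, ?_⟩
  have hWV : W.subtype '' (((↑) : W → M) ⁻¹' V) = V :=
    Set.image_preimage_eq_of_subset (by rw [coe_subtype, Subtype.range_coe]; exact subset_span)
  convert hb.map W.subtype
  exact hWV.symm

end BarycentricSpanner

theorem sum_abs_pos {ι R : Type*} [Fintype ι] [AddCommGroup R] [LinearOrder R]
    [IsOrderedAddMonoid R] {x : ι → R} (hx : x ≠ 0) : 0 < ∑ i, |x i| := by
  obtain ⟨i, hi⟩ := Function.ne_iff.mp hx
  exact Finset.sum_pos' (fun j _ => abs_nonneg _) ⟨i, Finset.mem_univ _, abs_pos.mpr hi⟩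

theorem sum_abs_div_sum_abs {ι R : Type*} [Fintype ι] [Field R] [LinearOrder R]
    [IsStrictOrderedRing R] {x : ι → R} (hx : x ≠ 0) : ∑ i, |(x i / ∑ i', |x i'|)| = 1 := by
  have hpos := sum_abs_pos hx
  simp only [abs_div, abs_of_pos hpos, ← Finset.sum_div, div_self hpos.ne']

theorem span_image_smul_eq {K M : Type*} [Field K] [AddCommGroup M] [Module K M] {s : Set M}
    {r : M → K} (hr : ∀ x ∈ s, r x ≠ 0) : span K ((fun x => r x • x) '' s) = span K s := by
  refine le_antisymm (span_le.mpr ?_) (span_le.mpr fun x hx => ?_)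
  · rintro _ ⟨x, hx, rfl⟩
    exact smul_mem _ _ (subset_span hx)
  · rw [← inv_smul_smul₀ (hr x hx) x]
    exact smul_mem _ _ (subset_span ⟨x, hx, rfl⟩)

theorem Matrix.sum_abs_mulVec_le {m n R : Type*} [Fintype m] [Fintype n] [Ring R] [LinearOrder R]
    [IsStrictOrderedRing R] (A : Matrix m n R) (hA : ∀ j, ∑ i, |A i j| ≤ 1) (z : n → R) :
    ∑ i, |(A *ᵥ z) i| ≤ ∑ j, |z j| :=
  calc ∑ i, |(A *ᵥ z) i| ≤ ∑ i, ∑ j, |A i j| * |z j| :=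
        Finset.sum_le_sum fun i _ => (Finset.abs_sum_le_sum_abs _ _).trans_eq (by simp [abs_mul])
    _ = ∑ j, (∑ i, |A i j|) * |z j| := by rw [Finset.sum_comm]; simp [Finset.sum_mul]
    _ ≤ ∑ j, |z j| :=
        Finset.sum_le_sum fun j _ => mul_le_of_le_one_left (abs_nonneg _) (hA j)

theorem moorePenrose_mul_self {m n : ℕ} {A : Matrix (Fin m) (Fin n) ℝ}
    (hA : LinearIndependent ℝ A.col) : moorePenrose A * A = 1 := by
  have hinj : Injective (Aᵀ * A).mulVec := by
    rw [← coe_mulVecLin, ← LinearMap.ker_eq_bot, ker_mulVecLin_transpose_mul_self,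
      LinearMap.ker_eq_bot, coe_mulVecLin, mulVec_injective_iff]
    exact hA
  rw [moorePenrose, Matrix.mul_assoc,
    nonsing_inv_mul _ ((isUnit_iff_isUnit_det _).mp (mulVec_injective_iff_isUnit.mp hinj))]

/-- ℓ1-norm projection lemma: for a finite set `X` of nonzero vectors spanning a
`d`-dimensional subspace, there is a matrix `A` whose columns are ℓ1-normalized
elements of `X`, with `A A† x = x`, `‖A† x‖₁ ≤ d ‖x‖₁` for every `x ∈ X`, and
ℓ1-operator norm `‖A‖₁ ≤ 1`. -/
theorem l1_projection {N d : ℕ} (X : Finset (Fin N → ℝ)) (hX0 : ∀ x ∈ X, x ≠ 0)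
    (hdim : Module.finrank ℝ (Submodule.span ℝ (X : Set (Fin N → ℝ))) = d) :
    ∃ A : Matrix (Fin N) (Fin d) ℝ,
      (∀ j : Fin d, ∃ x ∈ X, (fun i => A i j) = fun i => x i / ∑ i', |x i'|) ∧
      (∀ x ∈ X, A.mulVec ((moorePenrose A).mulVec x) = x) ∧
      (∀ x ∈ X, ∑ j, |(moorePenrose A).mulVec x j| ≤ (d : ℝ) * ∑ i, |x i|) ∧
      (∀ z : Fin d → ℝ, ∑ i, |A.mulVec z i| ≤ ∑ j, |z j|) := by
  classical
  have hnorm : ∀ x ∈ X, (∑ i, |x i|)⁻¹ ≠ 0 := fun x hx =>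
    inv_ne_zero (sum_abs_pos (hX0 x hx)).ne'
  set V := X.image fun x => (∑ i, |x i|)⁻¹ • x
  have hV : span ℝ (V : Set (Fin N → ℝ)) = span ℝ X := by
    rw [Finset.coe_image]
    exact span_image_smul_eq hnorm
  obtain ⟨b, hli, hb⟩ := exists_isBarycentricSpanner V (hV ▸ hdim)
  set A : Matrix (Fin N) (Fin d) ℝ := (Matrix.of b)ᵀ
  have hpinv : ∀ c, moorePenrose A *ᵥ (A *ᵥ c) = c := fun c => by
    rw [mulVec_mulVec, moorePenrose_mul_self (A := A) hli, one_mulVec]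
  have hcol : ∀ j, ∃ x ∈ X, (fun i => A i j) = fun i => x i / ∑ i', |x i'| := fun j => by
    obtain ⟨x, hx, hbx⟩ := Finset.mem_image.mp (hb.1 j)
    exact ⟨x, hx, by ext i; simp [A, ← hbx, div_eq_inv_mul]⟩
  have hrep : ∀ x ∈ X, ∃ c, A *ᵥ c = x ∧ ∑ j, |c j| ≤ d * ∑ i, |x i| := fun x hx => by
    obtain ⟨c, hc, hsum⟩ := hb.exists_of_smul_mem (hnorm x hx) (Finset.mem_image_of_mem _ hx)
    refine ⟨c, by rwa [mulVec_transpose, vecMul_eq_sum], ?_⟩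
    simpa [abs_of_pos (sum_abs_pos (hX0 x hx))] using
      Finset.sum_le_card_nsmul Finset.univ _ _ fun j _ => hc j
  refine ⟨A, hcol, fun x hx => ?_, fun x hx => ?_, A.sum_abs_mulVec_le fun j => ?_⟩
  · obtain ⟨c, rfl, -⟩ := hrep x hx
    rw [hpinv]
  · obtain ⟨c, rfl, hc⟩ := hrep x hx
    rwa [hpinv]
  · obtain ⟨x, hx, hAx⟩ := hcol j
    simp only [funext_iff] at hAx
    simp only [hAx, sum_abs_div_sum_abs (hX0 x hx), le_refl]
end

section
/- Let X and Θ be bounded subsets of ℝ^N with |⟨x, θ⟩| ≤ C for all x ∈ X, θ ∈ Θ, and suppose dim(span(X)) = d. Suppose x¹,...,x^K ∈ X and θ¹,...,θ^K ∈ Θ satisfy, for every k ∈ [K], the conditions Σ_{t<k} ⟨θ^k, x^t⟩² ≤ ε² and |⟨θ^k, x^k⟩| ≥ ε. Then K = O(d·log(dC/ε)); concretely, (3/2)^K ≤ (K d² C²/ε² + 1)^d. -/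
/-!
Pick `n = dim span {x^t} ≤ d` of the points maximising the determinant of their coordinates: by
Cramer's rule every `x^t` is a combination `∑ a^t_j x^{σ j}` with `|a^t_j| ≤ 1` (a barycentric
spanner). Then `⟨θ^k, x^t⟩ = ⟨w^k, a^t⟩` with `w^k_j = ⟨θ^k, x^{σ j}⟩ ∈ [-C, C]`, and the problem
lives in `ℝⁿ`. With `V_k = λ I + ∑_{t<k} a^t (a^t)ᵀ` and `λ = ε² / (n C²)`, ε-independence gives
`(w^k)ᵀ V_k w^k ≤ 2ε²`, so by Cauchy–Schwarz `(a^k)ᵀ V_k⁻¹ a^k ≥ 1/2`, and by the matrix determinant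
lemma `det V` grows by a factor at least `3/2` per step. AM–GM on the eigenvalues bounds the final
determinant by `(tr V_K / n)ⁿ ≤ (λ + K)ⁿ`.
-/

open Matrix Finset Module Submodule Set

theorem Real.prod_le_arith_mean_pow {ι : Type*} (s : Finset ι) (z : ι → ℝ)
    (hz : ∀ i ∈ s, 0 ≤ z i) : ∏ i ∈ s, z i ≤ ((∑ i ∈ s, z i) / #s) ^ #s := by
  rcases s.eq_empty_or_nonempty with rfl | hs
  · simp
  have hcard : (0 : ℝ) < #s := by exact_mod_cast hs.card_pos
  have hprod : 0 ≤ ∏ i ∈ s, z i := prod_nonneg hz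
  have amgm := Real.geom_mean_le_arith_mean_weighted s (fun _ ↦ (#s : ℝ)⁻¹) z
    (fun _ _ ↦ by positivity) (by simp [hcard.ne']) hz
  rw [Real.finsetProd_rpow s z hz, ← Finset.mul_sum, inv_mul_eq_div] at amgm
  calc ∏ i ∈ s, z i = ((∏ i ∈ s, z i) ^ (#s : ℝ)⁻¹) ^ #s := by
        rw [← Real.rpow_natCast, ← Real.rpow_mul hprod, inv_mul_cancel₀ hcard.ne', Real.rpow_one]
    _ ≤ _ := pow_le_pow_left₀ (by positivity) amgm _

theorem dotProduct_self_le_of_abs_le {m : Type*} [Fintype m] {v : m → ℝ} {r : ℝ}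
    (hv : ∀ i, |v i| ≤ r) : v ⬝ᵥ v ≤ Fintype.card m * r ^ 2 := by
  have := sum_le_card_nsmul univ (fun i ↦ v i * v i) (r ^ 2) fun i _ ↦ by
    rw [← abs_mul_abs_self, ← sq]
    exact pow_le_pow_left₀ (abs_nonneg _) (hv i) 2
  simpa [dotProduct] using this

section PosDef

variable {m : Type*} [Fintype m] [DecidableEq m]

theorem sq_dotProduct_le_of_posDef {V : Matrix m m ℝ} (hV : V.PosDef) (w c : m → ℝ) :
    (w ⬝ᵥ c) ^ 2 ≤ (w ⬝ᵥ (V *ᵥ w)) * (c ⬝ᵥ (V⁻¹ *ᵥ c)) := by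
  let := V.toSeminormedAddCommGroup hV.posSemidef
  let := V.toInnerProductSpace hV.posSemidef
  have hVV : V *ᵥ (V⁻¹ *ᵥ c) = c := by
    rw [mulVec_mulVec, mul_nonsing_inv _ hV.det_pos.ne'.isUnit, one_mulVec]
  have hcs := real_inner_mul_inner_self_le w (V⁻¹ *ᵥ c)
  change ((V *ᵥ _) ⬝ᵥ star w) * ((V *ᵥ _) ⬝ᵥ star w) ≤
    ((V *ᵥ w) ⬝ᵥ star w) * ((V *ᵥ _) ⬝ᵥ star (V⁻¹ *ᵥ c)) at hcs
  simp only [star_trivial, hVV] at hcs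
  rwa [dotProduct_comm w c, dotProduct_comm w (V *ᵥ w), sq]

theorem Matrix.PosSemidef.det_le_trace_div_card_pow {A : Matrix m m ℝ} (hA : A.PosSemidef) :
    A.det ≤ (A.trace / Fintype.card m) ^ Fintype.card m := by
  rw [hA.isHermitian.det_eq_prod_eigenvalues, hA.isHermitian.trace_eq_sum_eigenvalues]
  simpa using Real.prod_le_arith_mean_pow univ _ fun i _ ↦ hA.eigenvalues_nonneg i

end PosDef

section RegularizedGram

variable {m ι : Type*} [DecidableEq m]

def regularizedGram (lam : ℝ) (c : ι → m → ℝ) (s : Finset ι) : Matrix m m ℝ :=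
  lam • 1 + ∑ t ∈ s, vecMulVec (c t) (c t)

variable {lam : ℝ} {c : ι → m → ℝ} {s : Finset ι}

theorem regularizedGram_insert [DecidableEq ι] {t : ι} (ht : t ∉ s) :
    regularizedGram lam c (insert t s) = regularizedGram lam c s + vecMulVec (c t) (c t) := by
  rw [regularizedGram, regularizedGram, sum_insert ht]
  abel

variable [Fintype m]

theorem posDef_regularizedGram (hlam : 0 < lam) : (regularizedGram lam c s).PosDef :=
  (PosDef.one.smul hlam).add_posSemidef <|
    posSemidef_sum _ fun t _ ↦ by simpa using posSemidef_vecMulVec_self_star (c t)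

theorem dotProduct_regularizedGram_mulVec (w : m → ℝ) :
    w ⬝ᵥ (regularizedGram lam c s *ᵥ w) = lam * (w ⬝ᵥ w) + ∑ t ∈ s, (w ⬝ᵥ c t) ^ 2 := by
  simp only [regularizedGram, add_mulVec, smul_mulVec, one_mulVec, sum_mulVec, dotProduct_add,
    dotProduct_smul, dotProduct_sum, vecMulVec_mulVec, op_smul_eq_smul, smul_eq_mul, sq,
    dotProduct_comm _ w]

theorem trace_regularizedGram :
    (regularizedGram lam c s).trace = lam * Fintype.card m + ∑ t ∈ s, c t ⬝ᵥ c t := by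
  simp [regularizedGram, trace_sum, trace_vecMulVec]

theorem det_regularizedGram_insert [DecidableEq ι] (hlam : 0 < lam) {t : ι} (ht : t ∉ s) :
    (regularizedGram lam c (insert t s)).det =
      (regularizedGram lam c s).det * (1 + c t ⬝ᵥ ((regularizedGram lam c s)⁻¹ *ᵥ c t)) := by
  rw [regularizedGram_insert ht, vecMulVec_eq Unit,
    det_add_replicateCol_mul_replicateRow (posDef_regularizedGram hlam).det_pos.ne'.isUnit]
  congr 1
  rw [Matrix.mul_assoc, ← replicateCol_mulVec, det_unique]
  simp [replicateRow_mul_replicateCol_apply]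

theorem det_regularizedGram_le (hlam : 0 < lam) (hm : 0 < Fintype.card m) {R : ℝ}
    (hc : ∀ t ∈ s, c t ⬝ᵥ c t ≤ R) :
    (regularizedGram lam c s).det ≤ (lam + #s * R / Fintype.card m) ^ Fintype.card m := by
  have hm' : (0 : ℝ) < Fintype.card m := by exact_mod_cast hm
  have hpsd := (posDef_regularizedGram (c := c) (s := s) hlam).posSemidef
  refine hpsd.det_le_trace_div_card_pow.trans
    (pow_le_pow_left₀ (div_nonneg hpsd.trace_nonneg hm'.le) ?_ _)
  rw [trace_regularizedGram, div_le_iff₀ hm', add_mul, div_mul_cancel₀ _ hm'.ne']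
  have hsum := sum_le_card_nsmul s _ R hc
  rw [nsmul_eq_mul] at hsum
  linarith

theorem three_halves_mul_det_le_det_regularizedGram_insert [DecidableEq ι] (hlam : 0 < lam)
    {t : ι} (ht : t ∉ s) {w : m → ℝ} {ε : ℝ} (hε : 0 < ε) (hwt : ε ≤ |w ⬝ᵥ c t|)
    (hquad : w ⬝ᵥ (regularizedGram lam c s *ᵥ w) ≤ 2 * ε ^ 2) :
    3 / 2 * (regularizedGram lam c s).det ≤ (regularizedGram lam c (insert t s)).det := by
  have hV := posDef_regularizedGram (c := c) (s := s) hlam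
  have hinv : 0 ≤ c t ⬝ᵥ ((regularizedGram lam c s)⁻¹ *ᵥ c t) :=
    hV.inv.posSemidef.dotProduct_mulVec_nonneg _
  have hcs := sq_dotProduct_le_of_posDef hV w (c t)
  have hεw : ε ^ 2 ≤ (w ⬝ᵥ c t) ^ 2 := by simpa using pow_le_pow_left₀ hε.le hwt 2
  have half : 1 / 2 ≤ c t ⬝ᵥ ((regularizedGram lam c s)⁻¹ *ᵥ c t) := by
    nlinarith [mul_le_mul_of_nonneg_right hquad hinv, pow_pos hε 2]
  rw [det_regularizedGram_insert hlam ht]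
  nlinarith [hV.det_pos]

variable [Fintype ι] [LinearOrder ι] {w : ι → m → ℝ} {ε : ℝ}

theorem pow_mul_three_halves_pow_le_det_regularizedGram (hlam : 0 < lam) (hε : 0 < ε)
    (hw : ∀ k, lam * (w k ⬝ᵥ w k) ≤ ε ^ 2)
    (h1 : ∀ k, ∑ t ∈ univ.filter (· < k), (w k ⬝ᵥ c t) ^ 2 ≤ ε ^ 2)
    (h2 : ∀ k, ε ≤ |w k ⬝ᵥ c k|) (s : Finset ι) :
    lam ^ Fintype.card m * (3 / 2) ^ #s ≤ (regularizedGram lam c s).det := by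
  induction s using Finset.induction_on_max with
  | empty => simp [regularizedGram]
  | insert k s hlt ih =>
    have hks : k ∉ s := fun hk ↦ (hlt k hk).false
    have hprev : ∑ t ∈ s, (w k ⬝ᵥ c t) ^ 2 ≤ ε ^ 2 :=
      (sum_le_sum_of_subset_of_nonneg (fun t ht ↦ by simpa using hlt t ht)
        fun _ _ _ ↦ sq_nonneg _).trans (h1 k)
    have hquad : w k ⬝ᵥ (regularizedGram lam c s *ᵥ w k) ≤ 2 * ε ^ 2 := by
      rw [dotProduct_regularizedGram_mulVec]
      linarith [hw k]
    rw [card_insert_of_notMem hks, pow_succ, ← mul_assoc]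
    calc _ ≤ (regularizedGram lam c s).det * (3 / 2) := by gcongr
      _ ≤ _ := by
        rw [mul_comm]
        exact three_halves_mul_det_le_det_regularizedGram_insert hlam hks hε (h2 k) hquad

theorem three_halves_pow_card_le {R S : ℝ} (hε : 0 < ε)
    (hc : ∀ t, c t ⬝ᵥ c t ≤ R) (hw : ∀ k, w k ⬝ᵥ w k ≤ S)
    (h1 : ∀ k, ∑ t ∈ univ.filter (· < k), (w k ⬝ᵥ c t) ^ 2 ≤ ε ^ 2)
    (h2 : ∀ k, ε ≤ |w k ⬝ᵥ c k|) :
    (3 / 2 : ℝ) ^ Fintype.card ι ≤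
      (1 + Fintype.card ι * R * S / (Fintype.card m * ε ^ 2)) ^ Fintype.card m := by
  rcases isEmpty_or_nonempty ι with hι | ⟨⟨k⟩⟩
  · simp
  have hwk : w k ≠ 0 := by
    rintro hwk
    have := h2 k
    simp only [hwk, zero_dotProduct, abs_zero] at this
    linarith
  have hS : 0 < S := by
    have := PosDef.one.dotProduct_mulVec_pos hwk
    simp only [star_trivial, one_mulVec] at this
    exact this.trans_le (hw k)
  have hm : 0 < Fintype.card m := by
    obtain ⟨i, -⟩ := Function.ne_iff.mp hwk
    exact Fintype.card_pos_iff.mpr ⟨i⟩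
  set lam := ε ^ 2 / S with hlam_def
  have hlam : 0 < lam := by positivity
  have hlow := pow_mul_three_halves_pow_le_det_regularizedGram (c := c) hlam hε
    (fun k ↦ by rw [hlam_def, div_mul_eq_mul_div, div_le_iff₀ hS]; gcongr; exact hw k) h1 h2 univ
  have hup := det_regularizedGram_le (s := univ) hlam hm fun t _ ↦ hc t
  rw [card_univ] at hlow hup
  have key := hlow.trans hup
  rw [mul_comm, ← le_div_iff₀ (by positivity), ← div_pow] at key
  refine key.trans_eq (congrArg (· ^ _) ?_)
  have hm' : (Fintype.card m : ℝ) ≠ 0 := by positivity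
  rw [hlam_def]
  field_simp

theorem three_halves_pow_card_le_of_abs_le {C : ℝ} (hε : 0 < ε)
    (hc : ∀ t i, |c t i| ≤ 1) (hw : ∀ k i, |w k i| ≤ C)
    (h1 : ∀ k, ∑ t ∈ univ.filter (· < k), (w k ⬝ᵥ c t) ^ 2 ≤ ε ^ 2)
    (h2 : ∀ k, ε ≤ |w k ⬝ᵥ c k|) :
    (3 / 2 : ℝ) ^ Fintype.card ι ≤
      (1 + Fintype.card ι * Fintype.card m * C ^ 2 / ε ^ 2) ^ Fintype.card m := by
  have h := three_halves_pow_card_le hε (fun t ↦ dotProduct_self_le_of_abs_le (hc t))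
    (fun k ↦ dotProduct_self_le_of_abs_le (hw k)) h1 h2
  rcases (Fintype.card m).eq_zero_or_pos with hm | hm
  · simpa [hm] using h
  refine h.trans_eq (congrArg (· ^ _) ?_)
  have hm' : (Fintype.card m : ℝ) ≠ 0 := by positivity
  field_simp

end RegularizedGram

section BarycentricSpanner

variable {𝕜 E ι : Type*} [Field 𝕜] [LinearOrder 𝕜] [IsStrictOrderedRing 𝕜]
  [AddCommGroup E] [Module 𝕜 E] [Finite ι]

theorem exists_barycentricSpanner_of_span_eq_top [FiniteDimensional 𝕜 E] {v : ι → E}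
    (hv : span 𝕜 (range v) = ⊤) :
    ∃ (σ : Fin (finrank 𝕜 E) → ι) (a : ι → Fin (finrank 𝕜 E) → 𝕜),
      (∀ t j, |a t j| ≤ 1) ∧ ∀ t, ∑ j, a t j • v (σ j) = v t := by
  let e := finBasis 𝕜 E
  obtain ⟨κ, f, -, hspan, hli⟩ := exists_linearIndependent' 𝕜 v
  let b := Basis.mk hli (by rw [hspan, hv])
  let σ₀ : Fin (finrank 𝕜 E) → ι := f ∘ (b.indexEquiv e).symm
  have hσ₀ : e.det (v ∘ σ₀) ≠ 0 := by
    have hb : ⇑(b.reindex (b.indexEquiv e)) = v ∘ σ₀ := by ext; simp [b, σ₀]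
    rw [← hb]
    exact (e.is_basis_iff_det.mp ⟨Basis.linearIndependent _, Basis.span_eq _⟩).ne_zero
  have : Nonempty (Fin (finrank 𝕜 E) → ι) := ⟨σ₀⟩
  obtain ⟨σ, hσ⟩ := Finite.exists_max fun σ : Fin (finrank 𝕜 E) → ι ↦ |e.det (v ∘ σ)|
  have hdet : 0 < |e.det (v ∘ σ)| := (abs_pos.mpr hσ₀).trans_le (hσ σ₀)
  obtain ⟨hliσ, hspσ⟩ := e.is_basis_iff_det.mpr (abs_pos.mp hdet).isUnit
  let bσ := Basis.mk hliσ hspσ.ge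
  refine ⟨σ, fun t ↦ bσ.repr (v t), fun t j ↦ ?_, fun t ↦ by simpa [bσ] using bσ.sum_repr (v t)⟩
  -- Cramer's rule: the `j`-th coordinate of `v t` times `det (v ∘ σ)` is `det (v ∘ update σ j t)`.
  have hcramer := congrArg (· (v t)) (e.det_smul_mk_coord_eq_det_update hliσ hspσ.ge j)
  simp only [LinearMap.smul_apply, Basis.coord_apply, smul_eq_mul,
    MultilinearMap.toLinearMap_apply, AlternatingMap.coe_multilinearMap,
    ← Function.comp_update] at hcramer
  have hmax := hσ (Function.update σ j t)
  rw [← hcramer, abs_mul] at hmax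
  exact le_of_mul_le_mul_left (hmax.trans_eq (mul_one _).symm) hdet

theorem exists_barycentricSpanner (v : ι → E) :
    ∃ (σ : Fin (finrank 𝕜 (span 𝕜 (range v))) → ι)
      (a : ι → Fin (finrank 𝕜 (span 𝕜 (range v))) → 𝕜),
      (∀ t j, |a t j| ≤ 1) ∧ ∀ t, ∑ j, a t j • v (σ j) = v t := by
  let v' : ι → span 𝕜 (range v) := fun t ↦ ⟨v t, subset_span (mem_range_self t)⟩
  have hv' : span 𝕜 (range v') = ⊤ := by
    convert span_span_coe_preimage (R := 𝕜) (s := range v)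
    ext x
    simp [v', Subtype.ext_iff, eq_comm]
  have := FiniteDimensional.span_of_finite 𝕜 (finite_range v)
  obtain ⟨σ, a, ha, hsum⟩ := exists_barycentricSpanner_of_span_eq_top hv'
  exact ⟨σ, a, ha, fun t ↦ by simpa [v'] using congrArg Subtype.val (hsum t)⟩

end BarycentricSpanner

/-- ℓ2 eluder dimension of bounded linear classes: if `x¹,…,x^K ∈ X`,
`θ¹,…,θ^K ∈ Θ` form an ε-independent sequence for the linear class with
`|⟨x,θ⟩| ≤ C` and `dim span X = d`, then `(3/2)^K ≤ (K d² C²/ε² + 1)^d`. -/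
theorem eluder_linear {N : ℕ} (X Θ : Set (Fin N → ℝ)) (C ε : ℝ) (d K : ℕ)
    (hC : ∀ x ∈ X, ∀ θ ∈ Θ, |∑ i, x i * θ i| ≤ C)
    (hd : Module.finrank ℝ (Submodule.span ℝ X) = d)
    (hε : 0 < ε)
    (x : Fin K → Fin N → ℝ) (θ : Fin K → Fin N → ℝ)
    (hxX : ∀ k, x k ∈ X) (hθΘ : ∀ k, θ k ∈ Θ)
    (h1 : ∀ k : Fin K, ∑ t ∈ Finset.univ.filter (· < k), (∑ i, θ k i * x t i) ^ 2 ≤ ε ^ 2)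
    (h2 : ∀ k : Fin K, ε ≤ |∑ i, θ k i * x k i|) :
    (3 / 2 : ℝ) ^ K ≤ ((K : ℝ) * d ^ 2 * C ^ 2 / ε ^ 2 + 1) ^ d := by
  obtain ⟨σ, a, ha, hx⟩ := exists_barycentricSpanner (𝕜 := ℝ) x
  have hnd : finrank ℝ (span ℝ (range x)) ≤ d :=
    hd ▸ Submodule.finrank_mono (span_mono (range_subset_iff.2 hxX))
  generalize finrank ℝ (span ℝ (range x)) = n at σ a ha hx hnd
  set w : Fin K → Fin n → ℝ := fun k j ↦ θ k ⬝ᵥ x (σ j)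
  have hθx : ∀ k t, ∑ i, θ k i * x t i = w k ⬝ᵥ a t := fun k t ↦ by
    change θ k ⬝ᵥ x t = _
    rw [← hx t, dotProduct_comm (w k), dotProduct_sum]
    simp only [dotProduct_smul, smul_eq_mul]
    rfl
  have hw : ∀ k j, |w k j| ≤ C := fun k j ↦ by
    simpa [w, dotProduct, mul_comm] using hC _ (hxX (σ j)) _ (hθΘ k)
  have hpot := three_halves_pow_card_le_of_abs_le hε ha hw
    (by simpa only [hθx] using h1) (by simpa only [hθx] using h2)
  simp only [Fintype.card_fin] at hpot
  have hnd2 : (n : ℝ) ≤ d ^ 2 := by exact_mod_cast hnd.trans (Nat.le_self_pow two_ne_zero d)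
  calc (3 / 2 : ℝ) ^ K ≤ _ := hpot
    _ ≤ ((K : ℝ) * d ^ 2 * C ^ 2 / ε ^ 2 + 1) ^ n := by rw [add_comm]; gcongr
    _ ≤ _ := pow_le_pow_right₀ (le_add_of_nonneg_left (by positivity)) hnd
end

section
/- There exists a POMDP with 2 observations, 2 states, 1 action, emission matrices O_h = [[0.99, 0.01],[0.01, 0.99]], identity transitions, and uniform initial distribution μ₁ = (0.5, 0.5), which is 1-step 0.5-observable (i.e., ‖O_h(ν₁−ν₂)‖₁ ≥ 0.5‖ν₁−ν₂‖₁ for all ν₁,ν₂ ∈ Δ₂) but not m-step decodable for any m. Conversely, there exists a POMDP with 2 observations, 2 states, 2 actions, emission O_h = [[1,1],[0,0]], deterministic transitions T_{h,1} = [[1,1],[0,0]], T_{h,2} = [[0,0],[1,1]], and μ₁ = (1,0), which is 1-step decodable but not m-step α-observable for any m and any α > 0. -/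
/-- Separating observability from decodability in POMDPs.
(1)–(2): the POMDP with 2 states, 2 observations, 1 action, emission matrix
`[[0.99,0.01],[0.01,0.99]]`, identity transitions and uniform initial distribution is
1-step 0.5-observable, but not decodable: no decoder (even one reading the entire
observation history) recovers the latent state on all positive-probability trajectories.
(3)–(4): the POMDP with 2 states, 2 observations, 2 actions, emission
`[[1,1],[0,0]]` (observation always `0`), deterministic transitions `s_{h+1} = a_h` and
initial state `0` is 1-step decodable (via `s_{h+1} = ζ(a_h, o_{h+1})`), but not
`m`-step `α`-observable for any `m` and `α > 0`, since its `m`-step observation kernel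
`∏_i 1{o_i = 0}` does not depend on the latent state. -/
theorem observable_vs_decodable :
    -- (1) 1-step 0.5-observability of the first example
    (∀ ν₁ ν₂ : Fin 2 → ℝ,
      (∀ i, 0 ≤ ν₁ i) → ∑ i, ν₁ i = 1 →
      (∀ i, 0 ≤ ν₂ i) → ∑ i, ν₂ i = 1 →
      (1 / 2 : ℝ) * ∑ i, |ν₁ i - ν₂ i| ≤
        ∑ j, |(!![(0.99 : ℝ), 0.01; 0.01, 0.99]).mulVec (ν₁ - ν₂) j|) ∧
    -- (2) the first example is not decodable for any horizon, even from the full history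
    (∀ (H : ℕ), 0 < H → ∀ ζ : (Fin H → Fin 2) → Fin 2,
      ∃ (s : Fin 2) (o : Fin H → Fin 2),
        0 < (1 / 2 : ℝ) * ∏ h, !![(0.99 : ℝ), 0.01; 0.01, 0.99] (o h) s ∧ ζ o ≠ s) ∧
    -- (3) the second example is 1-step decodable: the state is a function of the most
    -- recent action-observation pair
    (∃ ζ : Fin 2 × Fin 2 → Fin 2, ∀ s a : ℕ → Fin 2,
      s 0 = 0 → (∀ h, s (h + 1) = a h) → ∀ h, s (h + 1) = ζ (a h, 0)) ∧
    -- (4) the second example is not m-step α-observable for any m and α > 0: its m-step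
    -- observation-action kernel is ∏ᵢ 1{oᵢ = 0} independently of state and actions
    (∀ (m : ℕ) (α : ℝ), 0 < α → ∀ a : Fin m → Fin 2,
      ∃ ν₁ ν₂ : Fin 2 → ℝ,
        (∀ i, 0 ≤ ν₁ i) ∧ ∑ i, ν₁ i = 1 ∧
        (∀ i, 0 ≤ ν₂ i) ∧ ∑ i, ν₂ i = 1 ∧
        ¬ (α * ∑ i, |ν₁ i - ν₂ i| ≤
          ∑ o : Fin m → Fin 2,
            |∑ s, (ν₁ s - ν₂ s) * ∏ i, (if o i = 0 then (1 : ℝ) else 0)|)) := by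
  refine ⟨?_, ?_, ?_, ?_⟩
  · intro ν₁ ν₂ h1 s1 h2 s2
    have hd : ν₁ 1 - ν₂ 1 = -(ν₁ 0 - ν₂ 0) := by
      simp [Fin.sum_univ_two] at s1 s2; linarith
    simp only [Fin.sum_univ_two, Matrix.mulVec, dotProduct, Pi.sub_apply,
      Fin.sum_univ_two, Matrix.cons_val', Matrix.cons_val_zero, Matrix.cons_val_one,
      Matrix.head_cons, Matrix.empty_val', Matrix.cons_val_fin_one, Matrix.head_fin_const]
    rw [hd]
    have e00 : (!![(0.99 : ℝ), 0.01; 0.01, 0.99]) 0 0 = 0.99 := rfl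
    have e01 : (!![(0.99 : ℝ), 0.01; 0.01, 0.99]) 0 1 = 0.01 := rfl
    have e10 : (!![(0.99 : ℝ), 0.01; 0.01, 0.99]) 1 0 = 0.01 := rfl
    have e11 : (!![(0.99 : ℝ), 0.01; 0.01, 0.99]) 1 1 = 0.99 := rfl
    rw [e00, e01, e10, e11]
    rw [show (0.99 : ℝ) * (ν₁ 0 - ν₂ 0) + 0.01 * -(ν₁ 0 - ν₂ 0) = 0.98 * (ν₁ 0 - ν₂ 0) by ring,
        show (0.01 : ℝ) * (ν₁ 0 - ν₂ 0) + 0.99 * -(ν₁ 0 - ν₂ 0) = -(0.98 * (ν₁ 0 - ν₂ 0)) by ring]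
    simp only [abs_neg, abs_mul, abs_of_pos (by norm_num : (0:ℝ) < 0.98)]
    linarith [abs_nonneg (ν₁ 0 - ν₂ 0)]
  · intro H hH ζ
    refine ⟨ζ (fun _ => 0) + 1, fun _ => 0, ?_, ?_⟩
    · apply mul_pos (by norm_num)
      apply Finset.prod_pos
      intro h _
      have : ∀ i j : Fin 2, 0 < !![(0.99 : ℝ), 0.01; 0.01, 0.99] i j := by
        intro i j; fin_cases i <;> fin_cases j <;> norm_num
      exact this _ _
    · have : ∀ x : Fin 2, x ≠ x + 1 := by decide
      exact this _
  · exact ⟨fun p => p.1, fun s a h0 hs h => hs h⟩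
  · intro m α hα a
    refine ⟨fun i => if i = 0 then 1 else 0, fun i => if i = 1 then 1 else 0,
      fun i => by positivity, by simp, fun i => by positivity, by simp, ?_⟩
    push_neg
    have hz : ∀ o : Fin m → Fin 2,
        |∑ s : Fin 2, ((if s = 0 then (1:ℝ) else 0) - (if s = 1 then 1 else 0)) *
          ∏ i, (if o i = 0 then (1 : ℝ) else 0)| = 0 := by
      intro o
      rw [Fin.sum_univ_two]
      norm_num
    calc ∑ o : Fin m → Fin 2, |∑ s : Fin 2, ((if s = 0 then (1:ℝ) else 0) - (if s = 1 then 1 else 0)) * ∏ i, (if o i = 0 then (1 : ℝ) else 0)| = 0 := by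
          exact Finset.sum_eq_zero fun o _ => hz o
      _ < α * ∑ i : Fin 2, |(if i = 0 then (1:ℝ) else 0) - (if i = 1 then 1 else 0)| := by
          rw [Fin.sum_univ_two]; norm_num; positivity
end

section
/- Upper bound for rank of PSR representations of decodable POMDPs via kernel linear MDPs: For any POMDP, the rank of every system-dynamics matrix D_h is at most the number of latent states S. Moreover, if the underlying latent MDP of the POMDP is a d_lin-dimensional kernel linear MDP—i.e., there exist feature maps φ: S×A → ℝ^{d_lin}, ψ: S → ℝ^{d_lin}, and matrices W_h ∈ ℝ^{d_lin×d_lin} with T_{h,a}(s'|s) = φ(s,a)ᵀ W_h ψ(s') for all h, s, a, s'—then rank(D_h) ≤ min(S, d_lin) for all h. -/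
open Matrix

/-- Unnormalized belief recursion of a POMDP: `bel h s = P(o_{1:h}, s_{h+1} = s)`,
alternating emission `diag(O_h(o_h|·))` and transition `T_{h,a_h}`. -/
noncomputable def bel {S O A : ℕ} (T : ℕ → Fin A → Matrix (Fin S) (Fin S) ℝ)
    (Ob : ℕ → Matrix (Fin O) (Fin S) ℝ) (μ : Fin S → ℝ)
    (o : ℕ → Fin O) (a : ℕ → Fin A) : ℕ → Fin S → ℝ
  | 0 => μ
  | h + 1 => (T h (a h)).mulVec fun s => Ob h (o h) s * bel T Ob μ o a h s

/-- Trajectory probability `P̄((o,a)_{1:H}) = 1ᵀ (∏_h T_{h,a_h} diag(O_h(o_h|·))) μ₁`. -/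
noncomputable def trajProb {S O A : ℕ} (H : ℕ) (hH : 0 < H)
    (T : ℕ → Fin A → Matrix (Fin S) (Fin S) ℝ)
    (Ob : ℕ → Matrix (Fin O) (Fin S) ℝ) (μ : Fin S → ℝ)
    (o : Fin H → Fin O) (a : Fin H → Fin A) : ℝ :=
  ∑ s, bel T Ob μ (fun k => if h : k < H then o ⟨k, h⟩ else o ⟨0, hH⟩)
      (fun k => if h : k < H then a ⟨k, h⟩ else a ⟨0, hH⟩) H s

/-- System-dynamics matrix `D_h` of the POMDP: rows indexed by futures, columns by
histories (both encoded as full trajectories). -/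
noncomputable def sysDynP {S O A : ℕ} (H : ℕ) (hH : 0 < H)
    (T : ℕ → Fin A → Matrix (Fin S) (Fin S) ℝ)
    (Ob : ℕ → Matrix (Fin O) (Fin S) ℝ) (μ : Fin S → ℝ) (h : ℕ) :
    Matrix ((Fin H → Fin O) × (Fin H → Fin A)) ((Fin H → Fin O) × (Fin H → Fin A)) ℝ :=
  Matrix.of fun fut hist =>
    trajProb H hH T Ob μ (fun i => if (i : ℕ) < h then hist.1 i else fut.1 i)
      (fun i => if (i : ℕ) < h then hist.2 i else fut.2 i)

/-!
Unrolling the belief recursion at time `h` writes `D_h = F * G`, where the column of `G` at a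
history is the unnormalized belief `bel h ∈ ℝ^S` it produces and the row of `F` at a future is
`1ᵀ` times the product of the remaining step matrices `T_{k,a_k} diag(O_k(o_k|·))`. Hence
`rank D_h ≤ rank G ≤ S`. For a kernel linear MDP every transition matrix factors as
`T_{h,a} = Ψ M_{h,a}` with `Ψ = (ψ(s'))_{s'} ∈ ℝ^{S × d_lin}`, so for `h ≥ 1` each belief
`bel h = T_{h-1,a} (⋯)` lies in the column space of `Ψ`, and `rank G ≤ d_lin`.
-/

theorem Matrix.rank_le_card_of_forall_col_eq_mulVec {m n k R : Type*} [Fintype n]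
    [Fintype k] [CommSemiring R] [StrongRankCondition R] (B : Matrix m k R)
    {M : Matrix m n R} (hM : ∀ j, ∃ c, ∀ i, M i j = (B *ᵥ c) i) : M.rank ≤ Fintype.card k := by
  choose c hc using hM
  have hBC : M = B * (Matrix.of fun l j => c j l) := by
    ext i j
    exact hc j i
  rw [hBC]
  exact (rank_mul_le_left _ _).trans (rank_le_card_width B)

section Belief

variable {S O A : ℕ} (T : ℕ → Fin A → Matrix (Fin S) (Fin S) ℝ)
  (Ob : ℕ → Matrix (Fin O) (Fin S) ℝ) (μ : Fin S → ℝ)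

noncomputable def stepMatrix (o : ℕ → Fin O) (a : ℕ → Fin A) (k : ℕ) :
    Matrix (Fin S) (Fin S) ℝ :=
  T k (a k) * diagonal fun s => Ob k (o k) s

noncomputable def stepProd (o : ℕ → Fin O) (a : ℕ → Fin A) (h : ℕ) :
    ℕ → Matrix (Fin S) (Fin S) ℝ
  | 0 => 1
  | n + 1 => stepMatrix T Ob o a (h + n) * stepProd o a h n

theorem bel_succ (o : ℕ → Fin O) (a : ℕ → Fin A) (k : ℕ) :
    bel T Ob μ o a (k + 1) = stepMatrix T Ob o a k *ᵥ bel T Ob μ o a k := by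
  rw [stepMatrix, ← mulVec_mulVec]
  show T k (a k) *ᵥ (fun s => Ob k (o k) s * bel T Ob μ o a k s) = _
  congr 1
  funext s
  exact (mulVec_diagonal (fun s => Ob k (o k) s) (bel T Ob μ o a k) s).symm

theorem bel_add (o : ℕ → Fin O) (a : ℕ → Fin A) (h n : ℕ) :
    bel T Ob μ o a (h + n) = stepProd T Ob o a h n *ᵥ bel T Ob μ o a h := by
  induction n with
  | zero => simp [stepProd]
  | succ n ih => rw [← add_assoc, bel_succ, ih, stepProd, mulVec_mulVec]

theorem bel_congr {o o' : ℕ → Fin O} {a a' : ℕ → Fin A} {h : ℕ}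
    (ho : ∀ k < h, o k = o' k) (ha : ∀ k < h, a k = a' k) :
    bel T Ob μ o a h = bel T Ob μ o' a' h := by
  induction h with
  | zero => rfl
  | succ h ih =>
    rw [bel_succ, bel_succ, stepMatrix, stepMatrix, ho h h.lt_succ_self, ha h h.lt_succ_self,
      ih (fun k hk => ho k (hk.trans h.lt_succ_self)) (fun k hk => ha k (hk.trans h.lt_succ_self))]

theorem stepProd_congr {o o' : ℕ → Fin O} {a a' : ℕ → Fin A} {h n : ℕ}
    (ho : ∀ k, h ≤ k → k < h + n → o k = o' k) (ha : ∀ k, h ≤ k → k < h + n → a k = a' k) :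
    stepProd T Ob o a h n = stepProd T Ob o' a' h n := by
  induction n with
  | zero => rfl
  | succ n ih =>
    have hn : h + n < h + (n + 1) := by omega
    rw [stepProd, stepProd, stepMatrix, stepMatrix, ho _ (h.le_add_right n) hn,
      ha _ (h.le_add_right n) hn,
      ih (fun k hk hk' => ho k hk (hk'.trans hn)) (fun k hk hk' => ha k hk (hk'.trans hn))]

end Belief

section SystemDynamics

/-- The extension of a length-`H` sequence to `ℕ` used by `trajProb`. -/
def extSeq {X : Type*} (H : ℕ) (hH : 0 < H) (f : Fin H → X) : ℕ → X :=
  fun k => if hk : k < H then f ⟨k, hk⟩ else f ⟨0, hH⟩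

section Splice

variable {X : Type*} {H h k : ℕ} (hH : 0 < H) (f g : Fin H → X)

theorem extSeq_splice_of_lt (hk : k < h) (hkH : k < H) :
    extSeq H hH (fun i => if (i : ℕ) < h then f i else g i) k = extSeq H hH f k := by
  simp [extSeq, hkH, hk]

theorem extSeq_splice_of_le (hk : h ≤ k) (hkH : k < H) :
    extSeq H hH (fun i => if (i : ℕ) < h then f i else g i) k = extSeq H hH g k := by
  simp [extSeq, hkH, hk.not_gt]

end Splice

variable {S O A : ℕ} (H : ℕ) (hH : 0 < H) (T : ℕ → Fin A → Matrix (Fin S) (Fin S) ℝ)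
  (Ob : ℕ → Matrix (Fin O) (Fin S) ℝ) (μ : Fin S → ℝ) (h : ℕ)

noncomputable def futureMatrix : Matrix ((Fin H → Fin O) × (Fin H → Fin A)) (Fin S) ℝ :=
  Matrix.of fun fut =>
    1 ᵥ* stepProd T Ob (extSeq H hH fut.1) (extSeq H hH fut.2) h (H - h)

noncomputable def historyMatrix : Matrix (Fin S) ((Fin H → Fin O) × (Fin H → Fin A)) ℝ :=
  Matrix.of fun s hist => bel T Ob μ (extSeq H hH hist.1) (extSeq H hH hist.2) h s

variable {h}

theorem sysDynP_eq_futureMatrix_mul_historyMatrix (hhH : h ≤ H) :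
    sysDynP H hH T Ob μ h = futureMatrix H hH T Ob h * historyMatrix H hH T Ob μ h := by
  ext fut hist
  set o := extSeq H hH fun i => if (i : ℕ) < h then hist.1 i else fut.1 i
  set a := extSeq H hH fun i => if (i : ℕ) < h then hist.2 i else fut.2 i
  have hist_eq : bel T Ob μ o a h = bel T Ob μ (extSeq H hH hist.1) (extSeq H hH hist.2) h :=
    bel_congr T Ob μ (fun k hk => extSeq_splice_of_lt hH _ _ hk (hk.trans_le hhH))
      (fun k hk => extSeq_splice_of_lt hH _ _ hk (hk.trans_le hhH))
  have fut_eq : stepProd T Ob o a h (H - h)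
      = stepProd T Ob (extSeq H hH fut.1) (extSeq H hH fut.2) h (H - h) :=
    stepProd_congr T Ob (fun k hk hk' => extSeq_splice_of_le hH _ _ hk (by omega))
      (fun k hk hk' => extSeq_splice_of_le hH _ _ hk (by omega))
  calc sysDynP H hH T Ob μ h fut hist
      = 1 ⬝ᵥ bel T Ob μ o a (h + (H - h)) := by
        rw [Nat.add_sub_cancel' hhH]
        exact (one_dotProduct (bel T Ob μ o a H)).symm
    _ = _ := by rw [bel_add, dotProduct_mulVec, hist_eq, fut_eq]; rfl

theorem rank_sysDynP_le_rank_historyMatrix (hhH : h ≤ H) :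
    (sysDynP H hH T Ob μ h).rank ≤ (historyMatrix H hH T Ob μ h).rank := by
  rw [sysDynP_eq_futureMatrix_mul_historyMatrix H hH T Ob μ hhH]
  exact rank_mul_le_right _ _

end SystemDynamics

section KernelLinear

variable {S A dlin : ℕ} (T : ℕ → Fin A → Matrix (Fin S) (Fin S) ℝ)
  (φ : Fin S → Fin A → Fin dlin → ℝ) (ψ : Fin S → Fin dlin → ℝ)
  (W : ℕ → Matrix (Fin dlin) (Fin dlin) ℝ)

/-- `T_{h,a}(s'|s) = φ(s,a)ᵀ W_h ψ(s')`; note that `T h a s' s` is the probability of `s → s'`. -/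
def IsKernelLinearMDP : Prop :=
  ∀ (h : ℕ) (a : Fin A) (s s' : Fin S), T h a s' s = ∑ k, ∑ l, φ s a k * W h k l * ψ s' l

variable {T φ ψ W}

theorem IsKernelLinearMDP.eq_mul (hT : IsKernelLinearMDP T φ ψ W) (h : ℕ) (a : Fin A) :
    T h a = Matrix.of ψ * (W h)ᵀ * Matrix.of fun k s => φ s a k := by
  ext s' s
  simp only [hT h a s s', mul_apply, transpose_apply, of_apply, Finset.sum_mul]
  exact Finset.sum_congr rfl fun _ _ => Finset.sum_congr rfl fun _ _ => by ring

theorem IsKernelLinearMDP.rank_historyMatrix_le {O H : ℕ} (hT : IsKernelLinearMDP T φ ψ W)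
    (hH : 0 < H) (Ob : ℕ → Matrix (Fin O) (Fin S) ℝ) (μ : Fin S → ℝ) {h : ℕ} (hh : 1 ≤ h) :
    (historyMatrix H hH T Ob μ h).rank ≤ dlin := by
  obtain ⟨g, rfl⟩ := Nat.exists_eq_add_of_le' hh
  simpa using Matrix.rank_le_card_of_forall_col_eq_mulVec (Matrix.of ψ) fun hist =>
    ⟨_, fun s => by rw [historyMatrix, of_apply, bel_succ, stepMatrix,
      hT.eq_mul, Matrix.mul_assoc, Matrix.mul_assoc, ← mulVec_mulVec]⟩

end KernelLinear

/-- Rank bounds for the system-dynamics matrices of POMDPs: `rank(D_h) ≤ S` always, and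
if the underlying latent MDP is a `d_lin`-dimensional kernel linear MDP
(`T_{h,a}(s'|s) = φ(s,a)ᵀ W_h ψ(s')`), then `rank(D_h) ≤ min(S, d_lin)` as well. -/
theorem pomdp_sysdyn_rank {S O A : ℕ} (H : ℕ) (hH : 0 < H) (dlin : ℕ)
    (T : ℕ → Fin A → Matrix (Fin S) (Fin S) ℝ)
    (Ob : ℕ → Matrix (Fin O) (Fin S) ℝ) (μ : Fin S → ℝ) :
    (∀ h ≤ H, (sysDynP H hH T Ob μ h).rank ≤ S) ∧
    (∀ (φ : Fin S → Fin A → Fin dlin → ℝ) (ψ : Fin S → Fin dlin → ℝ)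
        (W : ℕ → Matrix (Fin dlin) (Fin dlin) ℝ),
      (∀ (h : ℕ) (a : Fin A) (s s' : Fin S),
        T h a s' s = ∑ k, ∑ l, φ s a k * W h k l * ψ s' l) →
      ∀ h, 1 ≤ h → h ≤ H → (sysDynP H hH T Ob μ h).rank ≤ min S dlin) := by
  have rank_le_S : ∀ h ≤ H, (sysDynP H hH T Ob μ h).rank ≤ S := fun h hhH =>
    (rank_sysDynP_le_rank_historyMatrix H hH T Ob μ hhH).trans
      ((rank_le_card_height _).trans_eq (Fintype.card_fin S))
  refine ⟨rank_le_S, fun φ ψ W hT h hh hhH => le_min (rank_le_S h hhH) ?_⟩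
  exact (rank_sysDynP_le_rank_historyMatrix H hH T Ob μ hhH).trans
    ((show IsKernelLinearMDP T φ ψ W from hT).rank_historyMatrix_le hH Ob μ hh)
end
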